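/- arXiv:2209.12996 — 2 statements merged into one kernel-verified Lean document; each statement's English description precedes it below -/
import Mathlib

section
/- Let Γ be the graph product of a family of infinite groups {Γ_v} over a finite simple graph 𝒢, and let 𝒮, 𝒯 ⊆ 𝒱 be vertex subsets. If there exists g ∈ Γ such that the subgroup Γ_𝒮 ∩ g Γ_𝒯 g⁻¹ has finite index in Γ_𝒮, then 𝒮 ⊆ 𝒯. -/
/-!
Sending each vertex group to its own coordinate defines a homomorphism from the graph product to
`∀ v, Γ v`, since elements of distinct vertex groups commute in the product. If `v ∈ 𝒮 \ 𝒯`, the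
`v`-th coordinate kills `Γ_𝒯` and hence, being a homomorphism to a group, every conjugate of it,
while it maps `Γ_𝒮` onto the infinite group `Γ_v`. So `Γ_𝒮 ∩ g Γ_𝒯 g⁻¹` lies in a kernel of
infinite index in `Γ_𝒮`.
-/

open Monoid

variable {V : Type*}

/-- Defining relators of a graph product: commutators of elements of adjacent vertex groups. -/
def graphProdRels (G : SimpleGraph V) (Γ : V → Type*) [∀ v, Group (Γ v)] :
    Set (Monoid.CoprodI Γ) :=
  {x | ∃ (u w : V) (a : Γ u) (b : Γ w), G.Adj u w ∧
      x = CoprodI.of a * CoprodI.of b * (CoprodI.of a)⁻¹ * (CoprodI.of b)⁻¹}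

/-- The graph product of the family of groups `Γ` over the simple graph `G`. -/
def GraphProduct (G : SimpleGraph V) (Γ : V → Type*) [∀ v, Group (Γ v)] : Type _ :=
  CoprodI Γ ⧸ Subgroup.normalClosure (graphProdRels G Γ)

instance (G : SimpleGraph V) (Γ : V → Type*) [∀ v, Group (Γ v)] :
    Group (GraphProduct G Γ) :=
  inferInstanceAs (Group (CoprodI Γ ⧸ Subgroup.normalClosure (graphProdRels G Γ)))

/-- The canonical map from a vertex group into the graph product. -/
def GraphProduct.of {G : SimpleGraph V} {Γ : V → Type*} [∀ v, Group (Γ v)] (v : V) :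
    Γ v →* GraphProduct G Γ :=
  (QuotientGroup.mk' (Subgroup.normalClosure (graphProdRels G Γ))).comp CoprodI.of

/-- The full subgroup of a graph product associated with a set of vertices. -/
def GraphProduct.full (G : SimpleGraph V) (Γ : V → Type*) [∀ v, Group (Γ v)]
    (U : Set V) : Subgroup (GraphProduct G Γ) :=
  Subgroup.closure (⋃ u ∈ U, Set.range (GraphProduct.of (G := G) (Γ := Γ) u))

/-- The conjugate subgroup `g H g⁻¹`. -/
def conjSub {G : Type*} [Group G] (g : G) (H : Subgroup G) : Subgroup G :=
  Subgroup.map (MulAut.conj g).toMonoidHom H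

/-- The common link of a set of vertices. -/
def lkSet (G : SimpleGraph V) (S : Set V) : Set V :=
  ⋂ u ∈ S, G.neighborSet u

theorem Subgroup.relIndex_eq_zero_of_le_ker {G Q : Type*} [Group G] [Group Q]
    {H K : Subgroup G} (f : G →* Q) (hH : H ≤ f.ker) (hK : (K.map f : Set Q).Infinite) :
    H.relIndex K = 0 := by
  have hker : f.ker.relIndex K = 0 := by
    rw [Subgroup.relIndex_ker]
    exact hK.card_eq_zero
  exact Nat.eq_zero_of_zero_dvd (hker ▸ Subgroup.relIndex_dvd_of_le_left K hH)

theorem conjSub_le_of_le {G : Type*} [Group G] {H N : Subgroup G} [N.Normal] (hHN : H ≤ N)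
    (g : G) : conjSub g H ≤ N := by
  rintro _ ⟨h, hh, rfl⟩
  exact ‹N.Normal›.conj_mem h (hHN hh) g

namespace GraphProduct

variable {G : SimpleGraph V} {Γ : V → Type*} [∀ v, Group (Γ v)]

theorem of_mem_full {U : Set V} {v : V} (hv : v ∈ U) (a : Γ v) : of v a ∈ full G Γ U :=
  Subgroup.subset_closure (Set.mem_biUnion hv ⟨a, rfl⟩)

open Classical in
noncomputable def toPi (G : SimpleGraph V) (Γ : V → Type*) [∀ v, Group (Γ v)] :
    GraphProduct G Γ →* ∀ v, Γ v :=
  QuotientGroup.lift _ (Monoid.CoprodI.lift (MonoidHom.mulSingle Γ)) <| by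
    refine Subgroup.normalClosure_le_normal ?_
    rintro _ ⟨u, w, a, b, huw, rfl⟩
    have hcomm := Pi.mulSingle_commute huw.ne a b
    simp [hcomm.eq]

theorem toPi_of [DecidableEq V] (v : V) (a : Γ v) :
    toPi G Γ (of v a) = Pi.mulSingle v a := by
  change QuotientGroup.lift _ _ _ (QuotientGroup.mk' _ (Monoid.CoprodI.of a)) = _
  rw [QuotientGroup.mk'_apply, QuotientGroup.lift_mk, Monoid.CoprodI.lift_of]
  convert MonoidHom.mulSingle_apply (f := Γ) v a

theorem full_le_ker_toPi_eval {U : Set V} {v : V} (hv : v ∉ U) :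
    full G Γ U ≤ ((Pi.evalMonoidHom Γ v).comp (toPi G Γ)).ker := by
  classical
  refine (Subgroup.closure_le _).2 ?_
  simp only [Set.iUnion_subset_iff, Set.range_subset_iff]
  intro u hu a
  have huv : u ≠ v := fun h => hv (h ▸ hu)
  simp [toPi_of, Pi.mulSingle_eq_of_ne huv.symm]

theorem map_full_toPi_eval {U : Set V} {v : V} (hv : v ∈ U) :
    (full G Γ U).map ((Pi.evalMonoidHom Γ v).comp (toPi G Γ)) = ⊤ := by
  classical
  refine eq_top_iff.2 fun a _ => ⟨of v a, of_mem_full hv a, ?_⟩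
  simp [toPi_of]

end GraphProduct

theorem stmt_3_general {V : Type*} (G : SimpleGraph V) (Γ : V → Type*)
    [∀ v, Group (Γ v)] [∀ v, Infinite (Γ v)] (S T : Set V)
    (h : ∃ g : GraphProduct G Γ,
      ((conjSub g (GraphProduct.full G Γ T)).subgroupOf
        (GraphProduct.full G Γ S)).FiniteIndex) :
    S ⊆ T := by
  intro v hvS
  by_contra hvT
  obtain ⟨g, hfin⟩ := h
  refine hfin.index_ne_zero (Subgroup.relIndex_eq_zero_of_le_ker _
    (conjSub_le_of_le (GraphProduct.full_le_ker_toPi_eval hvT) g) ?_)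
  rw [GraphProduct.map_full_toPi_eval hvS, Subgroup.coe_top]
  exact Set.infinite_univ

/-- If `Γ_𝒮 ∩ g Γ_𝒯 g⁻¹` has finite index in `Γ_𝒮` for some `g`, then `𝒮 ⊆ 𝒯`. -/
theorem stmt_3 {V : Type*} [Fintype V] (G : SimpleGraph V) (Γ : V → Type*)
    [∀ v, Group (Γ v)] [∀ v, Infinite (Γ v)] (S T : Set V)
    (h : ∃ g : GraphProduct G Γ,
      ((conjSub g (GraphProduct.full G Γ T)).subgroupOf
        (GraphProduct.full G Γ S)).FiniteIndex) :
    S ⊆ T :=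
  stmt_3_general G Γ S T h
end

section
/- Let 𝒢 be a graph in class CC₁ with consecutive clique enumeration 𝒞₁, ..., 𝒞ₙ (n ≥ 4), and let Γ = 𝒢{Γ_v} be a graph product of groups. Then Γ is isomorphic to the graph product over the flower graph 𝒯ₙ (the simple cycle of n triangles, with outer petal vertices w₁,...,wₙ and base vertices b₁,...,bₙ) where the vertex group at wᵢ is the direct sum ⊕_{v ∈ 𝒞ᵢ^int} Γ_v and the vertex group at bᵢ is ⊕_{v ∈ 𝒞_{i-1,i}} Γ_v. -/
open Monoid

variable {V : Type*}

/-- A consecutive enumeration of the cliques of a graph in class `CC₁`: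
the cliques are `C 1, ..., C n` (indexed by `ZMod n`, `n ≥ 4`), consecutive cliques
intersect nontrivially, non-consecutive ones are disjoint, and each clique has a
nonempty interior `C i \ (C (i-1) ∪ C (i+1))`. -/
structure ConsecutiveCliques {V : Type*} (G : SimpleGraph V) (n : ℕ) where
  C : ZMod n → Set V
  four_le : 4 ≤ n
  isClique : ∀ i, G.IsClique (C i)
  isMaximal : ∀ i, ∀ s : Set V, G.IsClique s → C i ⊆ s → s = C i
  cliques_covered : ∀ s : Set V, G.IsClique s →
    (∀ t : Set V, G.IsClique t → s ⊆ t → t = s) → ∃ i, s = C i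
  inj : Function.Injective C
  inter_empty : ∀ i j : ZMod n, i ≠ j → i ≠ j + 1 → j ≠ i + 1 → C i ∩ C j = ∅
  inter_nonempty : ∀ i, (C i ∩ C (i + 1)).Nonempty
  int_nonempty : ∀ i, (C i \ (C (i - 1) ∪ C (i + 1))).Nonempty

/-- The flower graph `𝒯ₙ`: a simple cycle of `n` triangles, with base vertices
`Sum.inl i` forming an `n`-cycle and petal vertices `Sum.inr i` joined to the bases
`Sum.inl i` and `Sum.inl (i+1)`. -/
def flower (n : ℕ) : SimpleGraph (ZMod n ⊕ ZMod n) :=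
  SimpleGraph.fromRel (fun x y =>
    (∃ i : ZMod n, x = Sum.inl i ∧ y = Sum.inl (i + 1)) ∨
    (∃ i : ZMod n, x = Sum.inr i ∧ (y = Sum.inl i ∨ y = Sum.inl (i + 1))))

/-- The vertex groups on the flower graph: the petal vertex `wᵢ = Sum.inr i` carries the
direct sum of the vertex groups over `𝒞ᵢ^int`, and the base vertex `bᵢ = Sum.inl i`
carries the direct sum over `𝒞_{i-1,i}`. -/
def flowerGroups {V : Type*} {G : SimpleGraph V} {n : ℕ} (cc : ConsecutiveCliques G n)
    (Γ : V → Type*) [∀ v, Group (Γ v)] : ZMod n ⊕ ZMod n → Type _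
  | Sum.inl i => ∀ v : ↥(cc.C (i - 1) ∩ cc.C i), Γ v
  | Sum.inr i => ∀ v : ↥(cc.C i \ (cc.C (i - 1) ∪ cc.C (i + 1))), Γ v

instance {V : Type*} {G : SimpleGraph V} {n : ℕ} (cc : ConsecutiveCliques G n)
    (Γ : V → Type*) [∀ v, Group (Γ v)] : ∀ x, Group (flowerGroups cc Γ x)
  | Sum.inl _ => Pi.group
  | Sum.inr _ => Pi.group

/-! Every vertex of a `CC₁` graph lies in exactly one of the sets `𝒞_{i-1,i}`, `𝒞ᵢ^int`. These
pieces are cliques, and vertices in distinct pieces are adjacent iff the pieces are adjacent in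
`𝒯ₙ`: both say that the vertices share a maximal clique `𝒞ᵢ`, and the pieces inside `𝒞ᵢ` are
exactly the `i`-th triangle of `𝒯ₙ`. Collapsing each clique to one vertex carrying the direct
product of its (pairwise commuting) vertex groups leaves the graph product unchanged. -/

open scoped commutatorElement

namespace GraphProduct

variable {G : SimpleGraph V} {Γ : V → Type*} [∀ v, Group (Γ v)]

theorem of_commute {u w : V} (h : G.Adj u w) (a : Γ u) (b : Γ w) :
    Commute (of (G := G) u a) (of (G := G) w b) := by
  have hmem : ⁅(CoprodI.of a : CoprodI Γ), CoprodI.of b⁆ ∈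
      Subgroup.normalClosure (graphProdRels G Γ) :=
    Subgroup.subset_normalClosure ⟨u, w, a, b, h, (commutatorElement_def _ _).symm⟩
  rw [← commutatorElement_eq_one_iff_commute]
  exact (map_commutatorElement (QuotientGroup.mk' _) _ _).symm.trans
    ((QuotientGroup.eq_one_iff _).mpr hmem)

section lift

variable {M : Type*} [Group M] (f : ∀ v, Γ v →* M)
  (hf : ∀ u w, G.Adj u w → ∀ a b, Commute (f u a) (f w b))

def lift : GraphProduct G Γ →* M :=
  QuotientGroup.lift _ (Monoid.CoprodI.lift f) <| by
    refine Subgroup.normalClosure_le_normal ?_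
    rintro x ⟨u, w, a, b, hadj, rfl⟩
    simp only [SetLike.mem_coe, MonoidHom.mem_ker, map_mul, map_inv, Monoid.CoprodI.lift_of]
    rw [← commutatorElement_def, commutatorElement_eq_one_iff_commute]
    exact hf u w hadj a b

@[simp]
theorem lift_of (v : V) (a : Γ v) : lift f hf (of v a) = f v a :=
  Monoid.CoprodI.lift_of f a

end lift

@[ext]
theorem hom_ext {M : Type*} [Group M] {f g : GraphProduct G Γ →* M}
    (h : ∀ v, f.comp (of v) = g.comp (of v)) : f = g :=
  QuotientGroup.monoidHom_ext _ <| Monoid.CoprodI.ext_hom _ _ h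

variable {Δ : V → Type*} [∀ v, Group (Δ v)]

def map (f : ∀ v, Γ v →* Δ v) : GraphProduct G Γ →* GraphProduct G Δ :=
  lift (fun v => (of v).comp (f v)) fun _ _ h _ _ => of_commute h _ _

@[simp]
theorem map_of (f : ∀ v, Γ v →* Δ v) (v : V) (a : Γ v) : map f (of (G := G) v a) = of v (f v a) :=
  lift_of _ _ v a

def congrRight (e : ∀ v, Γ v ≃* Δ v) : GraphProduct G Γ ≃* GraphProduct G Δ :=
  MonoidHom.toMulEquiv (map fun v => (e v).toMonoidHom) (map fun v => (e v).symm.toMonoidHom)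
    (hom_ext fun v => by ext; simp) (hom_ext fun v => by ext; simp)

end GraphProduct

/-- `G` arises from `H` by replacing each vertex `x` with the clique `P x`. -/
structure SimpleGraph.IsCliqueBlowup {X : Type*} (G : SimpleGraph V) (H : SimpleGraph X)
    (P : X → Set V) : Prop where
  exists_mem : ∀ v, ∃ x, v ∈ P x
  pairwiseDisjoint : Pairwise fun x y => Disjoint (P x) (P y)
  isClique : ∀ x, G.IsClique (P x)
  adj_iff : ∀ {x y u w}, x ≠ y → u ∈ P x → w ∈ P y → (G.Adj u w ↔ H.Adj x y)

namespace SimpleGraph.IsCliqueBlowup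

open scoped Classical

variable {X : Type*} {G : SimpleGraph V} {H : SimpleGraph X} {P : X → Set V}
  (hP : G.IsCliqueBlowup H P)
include hP

noncomputable def part (v : V) : X :=
  (hP.exists_mem v).choose

theorem mem_part (v : V) : v ∈ P (hP.part v) :=
  (hP.exists_mem v).choose_spec

theorem part_eq {v : V} {x : X} (h : v ∈ P x) : hP.part v = x := by
  by_contra hne
  exact Set.disjoint_left.mp (hP.pairwiseDisjoint hne) (hP.mem_part v) h

variable (Γ : V → Type*) [∀ v, Group (Γ v)]

theorem commute_of_mulSingle {x y : X} {u w : V} (h : G.Adj u w) (hu : u ∈ P x)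
    (hw : w ∈ P y) (a : Γ u) (b : Γ w) :
    Commute (GraphProduct.of (G := H) (Γ := fun x => ∀ v : P x, Γ v) x (Pi.mulSingle ⟨u, hu⟩ a))
      (GraphProduct.of y (Pi.mulSingle ⟨w, hw⟩ b)) := by
  obtain rfl | hxy := eq_or_ne x y
  · have hne : (⟨u, hu⟩ : P x) ≠ ⟨w, hw⟩ := fun he => h.ne (congrArg Subtype.val he)
    exact (Pi.mulSingle_commute (f := fun v : P x => Γ v) hne a b).map _
  · exact GraphProduct.of_commute ((hP.adj_iff hxy hu hw).mp h) _ _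

noncomputable def toBlowup :
    GraphProduct G Γ →* GraphProduct H (fun x => ∀ v : P x, Γ v) :=
  GraphProduct.lift
    (fun v => (GraphProduct.of (G := H) (Γ := fun x => ∀ u : P x, Γ u) (hP.part v)).comp
      (MonoidHom.mulSingle (fun u : P (hP.part v) => Γ u) ⟨v, hP.mem_part v⟩))
    fun u w h => hP.commute_of_mulSingle Γ h (hP.mem_part u) (hP.mem_part w)

theorem toBlowup_of {v : V} {x : X} (hv : v ∈ P x) (a : Γ v) :
    hP.toBlowup Γ (GraphProduct.of v a) = GraphProduct.of x (Pi.mulSingle ⟨v, hv⟩ a) := by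
  obtain rfl := hP.part_eq hv
  exact GraphProduct.lift_of _ _ _ _

variable [∀ x, Fintype (P x)]

noncomputable def ofBlowupPart (x : X) : (∀ v : P x, Γ v) →* GraphProduct G Γ :=
  MonoidHom.noncommPiCoprod (fun v : P x => GraphProduct.of v.1)
    fun v w hvw _ _ => GraphProduct.of_commute
      (hP.isClique x v.2 w.2 fun he => hvw (Subtype.ext he)) _ _

noncomputable def ofBlowup :
    GraphProduct H (fun x => ∀ v : P x, Γ v) →* GraphProduct G Γ :=
  GraphProduct.lift (hP.ofBlowupPart Γ) fun _ _ hxy a b =>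
    MonoidHom.commute_noncommPiCoprod _ (fun w b' =>
      (MonoidHom.commute_noncommPiCoprod _ (fun v a' => GraphProduct.of_commute
        ((hP.adj_iff hxy.ne v.2 w.2).mpr hxy).symm b' a') a).symm) b

theorem ofBlowup_of_mulSingle {x : X} (v : P x) (a : Γ v) :
    hP.ofBlowup Γ (GraphProduct.of x (Pi.mulSingle v a)) = GraphProduct.of (G := G) v.1 a :=
  (GraphProduct.lift_of _ _ _ _).trans (MonoidHom.noncommPiCoprod_mulSingle _ _ _)

noncomputable def graphProductEquiv :
    GraphProduct G Γ ≃* GraphProduct H (fun x => ∀ v : P x, Γ v) :=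
  MonoidHom.toMulEquiv (hP.toBlowup Γ) (hP.ofBlowup Γ)
    (GraphProduct.hom_ext fun v => by
      ext a
      simp [hP.toBlowup_of Γ (hP.mem_part v), ofBlowup_of_mulSingle])
    (GraphProduct.hom_ext fun x => MonoidHom.pi_ext fun v a => by
      simp [ofBlowup_of_mulSingle, hP.toBlowup_of Γ v.2])

end SimpleGraph.IsCliqueBlowup

def flowerTriangle {n : ℕ} (i : ZMod n) : Set (ZMod n ⊕ ZMod n) :=
  {.inl i, .inl (i + 1), .inr i}

theorem flower_adj_of_mem_flowerTriangle {n : ℕ} {i : ZMod n} {x y : ZMod n ⊕ ZMod n}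
    (hx : x ∈ flowerTriangle i) (hy : y ∈ flowerTriangle i) (hxy : x ≠ y) :
    (flower n).Adj x y := by
  rw [flower, SimpleGraph.fromRel_adj]
  refine ⟨hxy, ?_⟩
  simp only [flowerTriangle, Set.mem_insert_iff, Set.mem_singleton_iff] at hx hy
  rcases hx with rfl | rfl | rfl <;> rcases hy with rfl | rfl | rfl <;> simp_all

theorem exists_flowerTriangle_of_flower_adj {n : ℕ} {x y : ZMod n ⊕ ZMod n}
    (h : (flower n).Adj x y) : ∃ i, x ∈ flowerTriangle i ∧ y ∈ flowerTriangle i := by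
  rw [flower, SimpleGraph.fromRel_adj] at h
  rcases h.2 with (⟨i, rfl, rfl⟩ | ⟨i, rfl, rfl | rfl⟩) | (⟨i, rfl, rfl⟩ | ⟨i, rfl, rfl | rfl⟩) <;>
    exact ⟨i, by simp [flowerTriangle]⟩

namespace ConsecutiveCliques

variable {G : SimpleGraph V} {n : ℕ} (cc : ConsecutiveCliques G n)

def piece : ZMod n ⊕ ZMod n → Set V
  | .inl i => cc.C (i - 1) ∩ cc.C i
  | .inr i => cc.C i \ (cc.C (i - 1) ∪ cc.C (i + 1))

theorem disjoint_C_sub_one_C_add_one (i : ZMod n) : Disjoint (cc.C (i - 1)) (cc.C (i + 1)) := by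
  have hne : ∀ k : ℕ, 0 < k → k < 4 → (k : ZMod n) ≠ 0 := fun k hk0 hk4 hk => by
    have := Nat.le_of_dvd hk0 ((ZMod.natCast_eq_zero_iff k n).mp hk)
    have := cc.four_le
    omega
  rw [Set.disjoint_iff_inter_eq_empty]
  refine cc.inter_empty _ _ (fun h => hne 2 (by norm_num) (by norm_num) ?_)
    (fun h => hne 3 (by norm_num) (by norm_num) ?_) (fun h => hne 1 (by norm_num) (by norm_num) ?_)
  · push_cast; linear_combination -h
  · push_cast; linear_combination -h
  · push_cast; linear_combination h

theorem eq_or_eq_add_one_or_eq_add_one_of_mem {i k : ZMod n} {v : V} (hi : v ∈ cc.C i)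
    (hk : v ∈ cc.C k) : k = i ∨ k = i + 1 ∨ i = k + 1 := by
  by_contra! h
  have := cc.inter_empty i k h.1.symm h.2.2 h.2.1
  exact (Set.eq_empty_iff_forall_notMem.mp this) v ⟨hi, hk⟩

theorem piece_subset_C {i : ZMod n} {x : ZMod n ⊕ ZMod n} (hx : x ∈ flowerTriangle i) :
    cc.piece x ⊆ cc.C i := by
  simp only [flowerTriangle, Set.mem_insert_iff, Set.mem_singleton_iff] at hx
  rcases hx with rfl | rfl | rfl
  · exact Set.inter_subset_right
  · simp [piece]
  · exact Set.sdiff_subset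

theorem mem_flowerTriangle_of_mem_piece {i : ZMod n} {x : ZMod n ⊕ ZMod n} {v : V}
    (hx : v ∈ cc.piece x) (hi : v ∈ cc.C i) : x ∈ flowerTriangle i := by
  simp only [flowerTriangle, Set.mem_insert_iff, Set.mem_singleton_iff]
  rcases x with j | j
  · obtain ⟨hj₁, hj⟩ := hx
    rcases cc.eq_or_eq_add_one_or_eq_add_one_of_mem hj hi with rfl | rfl | rfl
    · exact .inl rfl
    · exact (Set.disjoint_left.mp (cc.disjoint_C_sub_one_C_add_one j) hj₁ hi).elim
    · exact .inr (.inl rfl)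
  · obtain ⟨hj, hj'⟩ := hx
    rcases cc.eq_or_eq_add_one_or_eq_add_one_of_mem hj hi with rfl | rfl | rfl
    · exact .inr (.inr rfl)
    · exact (hj' (.inr hi)).elim
    · exact (hj' (.inl (by simpa using hi))).elim

theorem eq_of_mem_piece_inr {i : ZMod n} {y : ZMod n ⊕ ZMod n} {v : V}
    (hv : v ∈ cc.piece (.inr i)) (hy : v ∈ cc.piece y) : y = .inr i := by
  obtain ⟨hi, hi'⟩ := hv
  rcases cc.mem_flowerTriangle_of_mem_piece hy hi with rfl | rfl | rfl
  · exact (hi' (.inl hy.1)).elim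
  · exact (hi' (.inr hy.2)).elim
  · rfl

theorem pairwise_disjoint_piece : Pairwise fun x y => Disjoint (cc.piece x) (cc.piece y) := by
  intro x y hxy
  refine Set.disjoint_left.mpr fun v hx hy => hxy ?_
  rcases x with i | i
  · rcases y with j | j
    · rcases cc.mem_flowerTriangle_of_mem_piece hy hx.2 with h | h | h
      · exact h.symm
      · obtain rfl := Sum.inl.inj h
        exact (Set.disjoint_left.mp (cc.disjoint_C_sub_one_C_add_one i) hx.1 hy.2).elim
      · exact (Sum.inl_ne_inr (Set.mem_singleton_iff.mp h)).elim
    · exact cc.eq_of_mem_piece_inr hy hx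
  · exact (cc.eq_of_mem_piece_inr hx hy).symm

theorem exists_subset_C [Finite V] {s : Set V} (hs : G.IsClique s) : ∃ i, s ⊆ cc.C i := by
  obtain ⟨t, hst, ht⟩ := Finite.exists_le_maximal (p := G.IsClique) hs
  obtain ⟨i, rfl⟩ := cc.cliques_covered t ht.prop fun u hu htu => (ht.eq_of_le hu htu).symm
  exact ⟨i, hst⟩

theorem exists_mem_piece [Finite V] (v : V) : ∃ x, v ∈ cc.piece x := by
  obtain ⟨i, hi⟩ := cc.exists_subset_C (G.isClique_singleton v)
  have hv : v ∈ cc.C i := hi rfl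
  by_cases hprev : v ∈ cc.C (i - 1)
  · exact ⟨.inl i, hprev, hv⟩
  by_cases hnext : v ∈ cc.C (i + 1)
  · exact ⟨.inl (i + 1), by simpa [piece] using hv, hnext⟩
  · exact ⟨.inr i, hv, fun h => h.elim hprev hnext⟩

theorem isCliqueBlowup_flower [Finite V] : G.IsCliqueBlowup (flower n) cc.piece where
  exists_mem := cc.exists_mem_piece
  pairwiseDisjoint := cc.pairwise_disjoint_piece
  isClique x := by
    obtain ⟨i, hi⟩ : ∃ i, x ∈ flowerTriangle i := by
      rcases x with i | i <;> exact ⟨i, by simp [flowerTriangle]⟩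
    exact (cc.isClique i).subset (cc.piece_subset_C hi)
  adj_iff {x y u w} hxy hu hw := by
    constructor
    · intro h
      obtain ⟨i, hi⟩ := cc.exists_subset_C (G.isClique_pair.mpr fun _ => h)
      exact flower_adj_of_mem_flowerTriangle (cc.mem_flowerTriangle_of_mem_piece hu (hi (.inl rfl)))
        (cc.mem_flowerTriangle_of_mem_piece hw (hi (.inr rfl))) hxy
    · intro h
      obtain ⟨i, hx, hy⟩ := exists_flowerTriangle_of_flower_adj h
      refine cc.isClique i (cc.piece_subset_C hx hu) (cc.piece_subset_C hy hw) ?_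
      rintro rfl
      exact Set.disjoint_left.mp (cc.pairwise_disjoint_piece hxy) hu hw

def pieceEquiv (Γ : V → Type*) [∀ v, Group (Γ v)] :
    ∀ x, (∀ v : cc.piece x, Γ v) ≃* flowerGroups cc Γ x
  | .inl _ => MulEquiv.refl _
  | .inr _ => MulEquiv.refl _

end ConsecutiveCliques

/-- A graph product over a `CC₁` graph is isomorphic to the graph product over the flower
graph `𝒯ₙ` with the indicated direct sums of vertex groups as new vertex groups. -/
theorem stmt_7 {V : Type*} [Fintype V] (G : SimpleGraph V) (Γ : V → Type*)
    [∀ v, Group (Γ v)] {n : ℕ} (cc : ConsecutiveCliques G n) :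
    Nonempty (GraphProduct G Γ ≃* GraphProduct (flower n) (flowerGroups cc Γ)) := by
  classical
  exact ⟨(cc.isCliqueBlowup_flower.graphProductEquiv Γ).trans
    (GraphProduct.congrRight (cc.pieceEquiv Γ))⟩
end
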